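/- Let g := [[1_n, Z·J_n],[0, 1_n]] ∈ GL_{2n}(R) (block form with n×n blocks). Then g^{−1}·tσ(X)·g = [[(u+γ_1)·1_n, −(s−(u+γ_1))·Z·J_n],[−J_n·Ξ̃, −(u+γ_1)·1_n]]. -/

import Mathlib

open Matrix BigOperators

noncomputable section

namespace Stmt4

/-! ### The polynomial ring `R` in the variables `z i j`, `ξ i j` (`i ≤ j`), `s`, `u` -/

abbrev Var (n : ℕ) := ({p : Fin n × Fin n // p.1 ≤ p.2}) ⊕ (({p : Fin n × Fin n // p.1 ≤ p.2}) ⊕ Bool)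

abbrev R (n : ℕ) := MvPolynomial (Var n) ℂ

/-- `z_{ij}`, extended symmetrically. -/
def zv (n : ℕ) (i j : Fin n) : R n :=
  if h : i ≤ j then MvPolynomial.X (Sum.inl ⟨(i, j), h⟩)
  else MvPolynomial.X (Sum.inl ⟨(j, i), (le_total i j).resolve_left h⟩)

/-- `ξ_{ij}`, extended symmetrically. -/
def xiv (n : ℕ) (i j : Fin n) : R n :=
  if h : i ≤ j then MvPolynomial.X (Sum.inr (Sum.inl ⟨(i, j), h⟩))
  else MvPolynomial.X (Sum.inr (Sum.inl ⟨(j, i), (le_total i j).resolve_left h⟩))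

/-- `ξ̃_{ij}`: `ξ_{ij}` off the diagonal, `2ξ_{ii}` on the diagonal. -/
def xitv (n : ℕ) (i j : Fin n) : R n :=
  if i = j then 2 * xiv n i j else xiv n i j

def sv (n : ℕ) : R n := MvPolynomial.X (Sum.inr (Sum.inr false))

def uv (n : ℕ) : R n := MvPolynomial.X (Sum.inr (Sum.inr true))

/-- the symmetric matrix `Z` -/
def Zmat (n : ℕ) : Matrix (Fin n) (Fin n) (R n) := Matrix.of fun i j => zv n i j

/-- the symmetric matrix `Ξ̃` -/
def Xitmat (n : ℕ) : Matrix (Fin n) (Fin n) (R n) := Matrix.of fun i j => xitv n i j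

/-- `J_n`: ones on the antidiagonal -/
def Jmat (n : ℕ) : Matrix (Fin n) (Fin n) (R n) :=
  Matrix.of fun i j => if (i : ℕ) + (j : ℕ) + 1 = n then 1 else 0

/-- `γ_k := Σ_{I,J ⊆ [n], |I|=|J|=k} det(z^I_J)·det(ξ̃^I_J)` -/
def gamma (n k : ℕ) : R n :=
  ∑ I : {I : Finset (Fin n) // I.card = k}, ∑ J : {J : Finset (Fin n) // J.card = k},
    ((Zmat n).submatrix (I.1.orderEmbOfFin I.2) (J.1.orderEmbOfFin J.2)).det *
      ((Xitmat n).submatrix (I.1.orderEmbOfFin I.2) (J.1.orderEmbOfFin J.2)).det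

/-- `A(u)` -/
def Amat (n : ℕ) : Matrix (Fin n) (Fin n) (R n) := Matrix.of fun i j =>
  if i = j then
    uv n + ∑ k : Fin n, ∑ l : Fin n, if l ≠ i then zv n k l * xitv n k l else 0
  else -∑ k : Fin n, zv n i k * xitv n j k

/-- `b(u)` -/
def bmat (n : ℕ) : Matrix (Fin n) (Fin n) (R n) := Matrix.of fun i j =>
  -((uv n + sv n) * zv n i j) - ∑ k : Fin n, ∑ l : Fin n,
    (zv n i j * zv n k l - zv n k i * zv n j l) * xitv n k l

/-- `tσ(X)` in `n × n` block form -/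
def tsigma (n : ℕ) : Matrix (Fin n ⊕ Fin n) (Fin n ⊕ Fin n) (R n) :=
  Matrix.fromBlocks (Amat n) (bmat n * Jmat n) (-(Jmat n * Xitmat n))
    (-(Jmat n * (Amat n)ᵀ * Jmat n))


/-- `γ₁ := Σ_{k,l ∈ [n]} z_{kl} ξ̃_{kl}` -/
def gamma1 (n : ℕ) : R n := ∑ k : Fin n, ∑ l : Fin n, zv n k l * xitv n k l

/-- `g := [[1, Z·J_n], [0, 1]]` -/
def gmat (n : ℕ) : Matrix (Fin n ⊕ Fin n) (Fin n ⊕ Fin n) (R n) :=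
  Matrix.fromBlocks 1 (Zmat n * Jmat n) 0 1


section Aux

variable {n : ℕ}

lemma zv_symm (n : ℕ) (i j : Fin n) : zv n i j = zv n j i := by
  unfold zv
  rcases le_or_gt i j with h | h
  · rcases eq_or_lt_of_le h with rfl | h'
    · simp
    · rw [dif_pos h, dif_neg (not_le.mpr h')]
  · rw [dif_neg (not_le.mpr h), dif_pos h.le]

lemma xiv_symm (n : ℕ) (i j : Fin n) : xiv n i j = xiv n j i := by
  unfold xiv
  rcases le_or_gt i j with h | h
  · rcases eq_or_lt_of_le h with rfl | h'
    · simp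
    · rw [dif_pos h, dif_neg (not_le.mpr h')]
  · rw [dif_neg (not_le.mpr h), dif_pos h.le]

lemma xitv_symm (n : ℕ) (i j : Fin n) : xitv n i j = xitv n j i := by
  unfold xitv
  by_cases h : i = j
  · subst h; simp
  · rw [if_neg h, if_neg (fun e => h e.symm), xiv_symm]

lemma sum_ite_ne (i : Fin n) (f : Fin n → R n) :
    ∑ l, (if l ≠ i then f l else 0) = (∑ l, f l) - f i := by
  have h : ∀ l, (if l ≠ i then f l else 0) = f l - (if l = i then f l else 0) := by
    intro l; by_cases h : l = i <;> simp [h]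
  simp_rw [h, Finset.sum_sub_distrib]
  simp

lemma sum_ite_diag (i : Fin n) (P : R n) (Q f : Fin n → R n) :
    ∑ k, (if i = k then P else Q k) * f k
      = P * f i + (∑ k, Q k * f k) - Q i * f i := by
  have h1 : ∀ k, (if i = k then P else Q k) * f k
      = (if k = i then P * f k - Q k * f k else 0) + Q k * f k := by
    intro k; by_cases h : k = i
    · subst h; simp
    · have h' : ¬ i = k := fun e => h e.symm
      simp [h, h']
  simp_rw [h1, Finset.sum_add_distrib, Finset.sum_ite_eq' Finset.univ]
  simp; ring

lemma Jmat_apply (n : ℕ) (i j : Fin n) :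
    Jmat n i j = if j = Fin.rev i then 1 else 0 := by
  have : ((i : ℕ) + (j : ℕ) + 1 = n) ↔ j = Fin.rev i := by
    rw [Fin.ext_iff, Fin.val_rev]; omega
  simp [Jmat, this]

lemma Jmat_mul_Jmat (n : ℕ) : Jmat n * Jmat n = 1 := by
  ext i j
  rw [Matrix.mul_apply]
  simp_rw [Jmat_apply, ite_mul, one_mul, zero_mul,
    Finset.sum_ite_eq' Finset.univ]
  simp [Fin.rev_rev, Matrix.one_apply, eq_comm]

lemma topleft (n : ℕ) :
    Amat n + Zmat n * Xitmat n = (uv n + gamma1 n) • 1 := by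
  ext i j
  simp only [Matrix.add_apply, Matrix.mul_apply, Amat, Zmat, Xitmat, Matrix.of_apply,
    Matrix.smul_apply, Matrix.one_apply, smul_eq_mul]
  by_cases h : i = j
  · subst h
    rw [if_pos rfl, if_pos rfl, mul_one]
    simp_rw [sum_ite_ne, Finset.sum_sub_distrib]
    have h2 : ∑ k, zv n i k * xitv n k i = ∑ k, zv n k i * xitv n k i := by
      refine Finset.sum_congr rfl fun k _ => ?_
      rw [zv_symm]
    rw [h2, ← gamma1]
    ring
  · rw [if_neg h, if_neg h, mul_zero]
    have h2 : ∑ k, zv n i k * xitv n k j = ∑ k, zv n i k * xitv n j k := by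
      refine Finset.sum_congr rfl fun k _ => ?_
      rw [xitv_symm n k j]
    rw [h2]
    ring

lemma rightblock (n : ℕ) :
    Xitmat n * Zmat n + (Amat n)ᵀ = (uv n + gamma1 n) • 1 := by
  ext i j
  simp only [Matrix.add_apply, Matrix.mul_apply, Matrix.transpose_apply, Amat, Zmat, Xitmat,
    Matrix.of_apply, Matrix.smul_apply, Matrix.one_apply, smul_eq_mul]
  by_cases h : i = j
  · subst h
    rw [if_pos rfl, if_pos rfl, mul_one]
    simp_rw [sum_ite_ne, Finset.sum_sub_distrib]
    have h2 : ∑ k, xitv n i k * zv n k i = ∑ k, zv n k i * xitv n k i := by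
      refine Finset.sum_congr rfl fun k _ => ?_
      rw [xitv_symm n i k]; ring
    rw [h2, ← gamma1]
    ring
  · rw [if_neg (fun e : j = i => h e.symm), if_neg h, mul_zero]
    have h2 : ∑ k, xitv n i k * zv n k j = ∑ k, zv n j k * xitv n i k := by
      refine Finset.sum_congr rfl fun k _ => ?_
      rw [zv_symm n k j]; ring
    rw [h2]
    ring

lemma AZ_add_b (n : ℕ) :
    Amat n * Zmat n + bmat n = (-(sv n)) • Zmat n := by
  ext i j
  simp only [Matrix.add_apply, Matrix.mul_apply, Amat, Zmat, bmat, Matrix.of_apply,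
    Matrix.smul_apply, smul_eq_mul]
  rw [sum_ite_diag]
  -- abbreviations
  set G := gamma1 n with hG
  set T := ∑ k, zv n k i * xitv n k i with hT
  -- rewrite P
  have hP : (∑ k, ∑ l, if l ≠ i then zv n k l * xitv n k l else 0) = G - T := by
    simp_rw [sum_ite_ne, Finset.sum_sub_distrib]
    rw [hG, gamma1, hT]
  have hT' : (∑ m, zv n i m * xitv n i m) = T := by
    rw [hT]
    refine Finset.sum_congr rfl fun m _ => ?_
    rw [zv_symm n i m, xitv_symm n i m]
  -- U : full double sum
  set U := ∑ k, ∑ m, zv n i m * xitv n k m * zv n k j with hU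
  have hU' : (∑ k, (-∑ m, zv n i m * xitv n k m) * zv n k j) = -U := by
    rw [hU, ← Finset.sum_neg_distrib]
    refine Finset.sum_congr rfl fun k _ => ?_
    rw [neg_mul, Finset.sum_mul]
  have hb : (∑ k, ∑ l, (zv n i j * zv n k l - zv n k i * zv n j l) * xitv n k l)
      = zv n i j * G - U := by
    have e1 : ∀ k l : Fin n, (zv n i j * zv n k l - zv n k i * zv n j l) * xitv n k l
        = zv n i j * (zv n k l * xitv n k l) - zv n k i * zv n j l * xitv n k l := by
      intro k l; ring
    simp_rw [e1, Finset.sum_sub_distrib, ← Finset.mul_sum]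
    have e2 : (∑ k, ∑ l, zv n k i * zv n j l * xitv n k l) = U := by
      rw [Finset.sum_comm, hU]
      refine Finset.sum_congr rfl fun k _ => Finset.sum_congr rfl fun l _ => ?_
      rw [zv_symm n l i, zv_symm n j k, xitv_symm n l k]
      ring
    rw [e2, hG, gamma1]
  rw [hP, hT', hU', hb]
  ring

lemma ZAt_add_b (n : ℕ) :
    Zmat n * (Amat n)ᵀ + bmat n = (-(sv n)) • Zmat n := by
  ext i j
  simp only [Matrix.add_apply, Matrix.mul_apply, Matrix.transpose_apply, Amat, Zmat, bmat,
    Matrix.of_apply, Matrix.smul_apply, smul_eq_mul]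
  rw [show (∑ k, zv n i k * (if j = k then
        uv n + ∑ k', ∑ l, if l ≠ j then zv n k' l * xitv n k' l else 0
      else -∑ m, zv n j m * xitv n k m))
    = ∑ k, (if j = k then
        uv n + ∑ k', ∑ l, if l ≠ j then zv n k' l * xitv n k' l else 0
      else -∑ m, zv n j m * xitv n k m) * zv n i k
    from Finset.sum_congr rfl fun k _ => mul_comm _ _]
  rw [sum_ite_diag]
  set G := gamma1 n with hG
  set T := ∑ k, zv n k j * xitv n k j with hT
  have hP : (∑ k, ∑ l, if l ≠ j then zv n k l * xitv n k l else 0) = G - T := by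
    simp_rw [sum_ite_ne, Finset.sum_sub_distrib]
    rw [hG, gamma1, hT]
  have hT' : (∑ m, zv n j m * xitv n j m) = T := by
    rw [hT]
    refine Finset.sum_congr rfl fun m _ => ?_
    rw [zv_symm n j m, xitv_symm n j m]
  set U := ∑ k, ∑ m, zv n j m * xitv n k m * zv n i k with hU
  have hU' : (∑ k, (-∑ m, zv n j m * xitv n k m) * zv n i k) = -U := by
    rw [hU, ← Finset.sum_neg_distrib]
    refine Finset.sum_congr rfl fun k _ => ?_
    rw [neg_mul, Finset.sum_mul]
  have hb : (∑ k, ∑ l, (zv n i j * zv n k l - zv n k i * zv n j l) * xitv n k l)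
      = zv n i j * G - U := by
    have e1 : ∀ k l : Fin n, (zv n i j * zv n k l - zv n k i * zv n j l) * xitv n k l
        = zv n i j * (zv n k l * xitv n k l) - zv n k i * zv n j l * xitv n k l := by
      intro k l; ring
    simp_rw [e1, Finset.sum_sub_distrib, ← Finset.mul_sum]
    have e2 : (∑ k, ∑ l, zv n k i * zv n j l * xitv n k l) = U := by
      rw [hU]
      refine Finset.sum_congr rfl fun k _ => Finset.sum_congr rfl fun l _ => ?_
      rw [zv_symm n k i]
      ring
    rw [e2, hG, gamma1]
  rw [hP, hT', hU', hb]
  ring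

lemma bottomright (n : ℕ) :
    (-(Jmat n * Xitmat n)) * (Zmat n * Jmat n) + (-(Jmat n * (Amat n)ᵀ * Jmat n))
      = -((uv n + gamma1 n) • 1) := by
  have h1 : (-(Jmat n * Xitmat n)) * (Zmat n * Jmat n) + (-(Jmat n * (Amat n)ᵀ * Jmat n))
      = -(Jmat n * (Xitmat n * Zmat n + (Amat n)ᵀ) * Jmat n) := by
    noncomm_ring
  rw [h1, rightblock, Matrix.mul_smul, Matrix.mul_one, Matrix.smul_mul, Jmat_mul_Jmat]

end Aux

/-- `g ∈ GL_{2n}(R)` and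
`g⁻¹·tσ(X)·g = [[(u+γ₁)·1, −(s−(u+γ₁))·Z·J_n], [−J_n·Ξ̃, −(u+γ₁)·1]]`. -/
theorem conj_tsigma (n : ℕ) (hn : 1 ≤ n) :
    IsUnit (gmat n).det ∧
    (gmat n)⁻¹ * tsigma n * gmat n =
      Matrix.fromBlocks ((uv n + gamma1 n) • 1)
        (-((sv n - (uv n + gamma1 n)) • (Zmat n * Jmat n)))
        (-(Jmat n * Xitmat n)) (-((uv n + gamma1 n) • 1)) := by
  have hmul : gmat n * Matrix.fromBlocks 1 (-(Zmat n * Jmat n)) 0 1 = 1 := by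
    rw [gmat, Matrix.fromBlocks_multiply, ← Matrix.fromBlocks_one]
    congr 1 <;> simp
  have hdet : IsUnit (gmat n).det := Matrix.isUnit_det_of_right_inverse hmul
  refine ⟨hdet, ?_⟩
  rw [inv_eq_right_inv hmul, tsigma]
  conv_lhs => rw [gmat]
  rw [Matrix.fromBlocks_multiply, Matrix.fromBlocks_multiply]
  rw [Matrix.fromBlocks_inj]
  simp only [Matrix.one_mul, Matrix.mul_one, Matrix.zero_mul, Matrix.mul_zero,
    add_zero, zero_add]
  refine ⟨?_, ?_, ?_, ?_⟩
  · -- top left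
    have h1 : (-(Zmat n * Jmat n)) * (-(Jmat n * Xitmat n)) = Zmat n * Xitmat n := by
      rw [Matrix.neg_mul, Matrix.mul_neg, neg_neg, Matrix.mul_assoc (Zmat n),
        ← Matrix.mul_assoc (Jmat n), Jmat_mul_Jmat, Matrix.one_mul]
    rw [h1, topleft]
  · -- top right
    have h1 : (-(Zmat n * Jmat n)) * (-(Jmat n * Xitmat n)) = Zmat n * Xitmat n := by
      rw [Matrix.neg_mul, Matrix.mul_neg, neg_neg, Matrix.mul_assoc (Zmat n),
        ← Matrix.mul_assoc (Jmat n), Jmat_mul_Jmat, Matrix.one_mul]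
    rw [h1, topleft, Matrix.smul_mul, Matrix.one_mul]
    have h2 : (-(Zmat n * Jmat n)) * (-(Jmat n * (Amat n)ᵀ * Jmat n))
        = Zmat n * (Amat n)ᵀ * Jmat n := by
      rw [Matrix.neg_mul, Matrix.mul_neg, neg_neg, Matrix.mul_assoc (Zmat n) (Jmat n),
        ← Matrix.mul_assoc (Jmat n) (Jmat n * (Amat n)ᵀ) (Jmat n),
        ← Matrix.mul_assoc (Jmat n) (Jmat n) ((Amat n)ᵀ), Jmat_mul_Jmat, Matrix.one_mul,
        ← Matrix.mul_assoc]
    rw [h2]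
    have h3 : bmat n * Jmat n + Zmat n * (Amat n)ᵀ * Jmat n
        = (-(sv n)) • (Zmat n * Jmat n) := by
      rw [← Matrix.add_mul, add_comm, ZAt_add_b, Matrix.smul_mul]
    rw [h3]
    module
  · trivial
  · -- bottom right
    exact bottomright n


end Stmt4
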